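/- Let H be a complex Hilbert space, let D' ⊆ D be subspaces of H, let Q be a nonnegative Hermitian sesquilinear form with domain D, and let P be a nonnegative Hermitian sesquilinear form with domain D'. Suppose D' is dense in D with respect to the graph norm ‖u‖_Q = (‖u‖² + Q(u,u))^{1/2}. For t > 0 define the form Q^t on D' by Q^t(u,v) = Q(u,v) + t·P(u,v). Then for every positive integer k, lim_{t→0⁺} λ_k(Q^t, D') = λ_k(Q, D) (as elements of [0,∞]; in particular the limit exists). -/

import Mathlib

open scoped ComplexInnerProductSpace ENNReal

/-- The supremum of the Rayleigh quotient `Q(u,u)/‖u‖²` over nonzero `u` in a subspace `L`. -/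
noncomputable def rayleighSup {H : Type*} [NormedAddCommGroup H] [InnerProductSpace ℂ H]
    (Q : H → H → ℂ) (L : Submodule ℂ H) : ℝ≥0∞ :=
  ⨆ u ∈ {u : H | u ∈ L ∧ u ≠ 0}, ENNReal.ofReal ((Q u u).re / ‖u‖ ^ 2)

/-- The k-th variational eigenvalue of a form `Q` with domain `D`:
the infimum, over all `k`-dimensional subspaces `L ⊆ D`, of the sup of the Rayleigh quotient
over `L`; the infimum of the empty set is `+∞`. -/
noncomputable def varEig {H : Type*} [NormedAddCommGroup H] [InnerProductSpace ℂ H]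
    (Q : H → H → ℂ) (D : Submodule ℂ H) (k : ℕ) : ℝ≥0∞ :=
  ⨅ L ∈ {L : Submodule ℂ H | L ≤ D ∧ Module.finrank ℂ ↥L = k}, rayleighSup Q L

/-- `Q` is a nonnegative Hermitian sesquilinear form with domain the subspace `D`:
it is linear in the first argument (and hence, being Hermitian, conjugate-linear in the
second), Hermitian, and `Q(u,u) ≥ 0` on `D`. -/
structure IsNonnegHermitianFormOn {H : Type*} [NormedAddCommGroup H] [InnerProductSpace ℂ H]
    (Q : H → H → ℂ) (D : Submodule ℂ H) : Prop where
  add_left : ∀ u v w, u ∈ D → v ∈ D → w ∈ D → Q (u + v) w = Q u w + Q v w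
  smul_left : ∀ (c : ℂ) (u v : H), u ∈ D → v ∈ D → Q (c • u) v = c * Q u v
  hermitian : ∀ u v, u ∈ D → v ∈ D → Q u v = starRingEnd ℂ (Q v u)
  nonneg : ∀ u, u ∈ D → 0 ≤ (Q u u).re

open scoped Topology

/-!
Since `D' ⊆ D` and `P ≥ 0`, every `Q + tP` on `D'` has eigenvalues at least those of `Q` on `D`.
Conversely, let `L ⊆ D` be `k`-dimensional with Rayleigh quotient of `Q` at most `M`.
Approximating a basis of `L` in the graph norm by vectors of `D'` gives a linear map
`T : L → D'` with `‖x - Tx‖ + Q(x - Tx)^{1/2} ≤ η ‖x‖`; hence `T L` is `k`-dimensional and the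
Rayleigh quotient of `Q` on it is at most `((√M + η) / (1 - η))²`. On the finite-dimensional
space `T L` the form `P` is bounded, so adding `tP` raises this bound only by `O(t)`.
-/

namespace Module.Basis

variable {𝕜 E ι : Type*} [NontriviallyNormedField 𝕜] [CompleteSpace 𝕜]
  [NormedAddCommGroup E] [NormedSpace 𝕜 E] [Fintype ι]

theorem exists_seminorm_le (v : Basis ι 𝕜 E) :
    ∃ C, 0 ≤ C ∧ ∀ (q : Seminorm 𝕜 E) x, q x ≤ C * (∑ i, q (v i)) * ‖x‖ := by
  set φ : E →L[𝕜] ι → 𝕜 := v.equivFunL.toContinuousLinearMap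
  refine ⟨‖φ‖, norm_nonneg _, fun q x => ?_⟩
  calc q x = q (∑ i, v.equivFun x i • v i) := by rw [v.sum_equivFun]
    _ ≤ ∑ i, q (v.equivFun x i • v i) :=
        Finset.le_sum_of_subadditive q (map_zero q).le (map_add_le_add q) _ _
    _ = ∑ i, ‖φ x i‖ * q (v i) := by simp [φ, map_smul_eq_mul]
    _ ≤ ∑ i, ‖φ‖ * ‖x‖ * q (v i) := by
        gcongr with i
        exact (norm_le_pi_norm (φ x) i).trans (φ.le_opNorm x)
    _ = ‖φ‖ * (∑ i, q (v i)) * ‖x‖ := by rw [Finset.mul_sum, Finset.sum_mul]; ring_nf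

end Module.Basis

namespace Seminorm

variable {𝕜 E F : Type*} [NontriviallyNormedField 𝕜] [CompleteSpace 𝕜]
  [NormedAddCommGroup F] [NormedSpace 𝕜 F] [FiniteDimensional 𝕜 F]
  [AddCommGroup E] [Module 𝕜 E]

theorem exists_le_mul_norm (q : Seminorm 𝕜 F) : ∃ C, ∀ x, q x ≤ C * ‖x‖ :=
  let ⟨_, _, hC⟩ := (Module.finBasis 𝕜 F).exists_seminorm_le
  ⟨_, hC q⟩

theorem exists_linearMap_sub_le (p : Seminorm 𝕜 E) (S : Submodule 𝕜 E)
    (hS : ∀ u, ∀ δ > 0, ∃ v ∈ S, p (u - v) < δ) (ι : F →ₗ[𝕜] E) {η : ℝ} (hη : 0 < η) :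
    ∃ T : F →ₗ[𝕜] E, (∀ x, T x ∈ S) ∧ ∀ x, p (ι x - T x) ≤ η * ‖x‖ := by
  obtain ⟨n, ⟨b⟩⟩ : ∃ n, Nonempty (Module.Basis (Fin n) 𝕜 F) := ⟨_, ⟨Module.finBasis 𝕜 F⟩⟩
  obtain ⟨C, hC, hbC⟩ := b.exists_seminorm_le
  have hδ : 0 < η / (C * n + 1) := by positivity
  choose v hvS hv using fun i => hS (ι (b i)) _ hδ
  refine ⟨b.constr 𝕜 v, fun x => ?_, fun x => ?_⟩
  · have : b.constr 𝕜 v x ∈ Submodule.span 𝕜 (Set.range v) := by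
      rw [← b.constr_range 𝕜]; exact LinearMap.mem_range_self _ x
    exact Submodule.span_le.2 (Set.range_subset_iff.2 hvS) this
  · have hsum : ∑ i, p.comp (ι - b.constr 𝕜 v) (b i) ≤ n * (η / (C * n + 1)) := by
      calc ∑ i, p.comp (ι - b.constr 𝕜 v) (b i) ≤ ∑ _i : Fin n, η / (C * n + 1) := by
            gcongr with i
            simpa [b.constr_basis] using (hv i).le
        _ = n * (η / (C * n + 1)) := by simp
    calc p (ι x - b.constr 𝕜 v x) = p.comp (ι - b.constr 𝕜 v) x := rfl
      _ ≤ C * (∑ i, p.comp (ι - b.constr 𝕜 v) (b i)) * ‖x‖ := hbC _ x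
      _ ≤ C * (n * (η / (C * n + 1))) * ‖x‖ := by gcongr
      _ ≤ η * ‖x‖ := by
          gcongr
          rw [← mul_assoc, mul_div_assoc', div_le_iff₀ (by positivity)]
          nlinarith

end Seminorm

theorem Seminorm.le_mul_norm_of_sub_le {𝕜 E : Type*} [NormedField 𝕜] [SeminormedAddCommGroup E]
    [Module 𝕜 E] (q : Seminorm 𝕜 E) {x y : E} {a η : ℝ} (ha : 0 ≤ a) (hη₀ : 0 ≤ η) (hη : η < 1)
    (hx : q x ≤ a * ‖x‖) (hxy : ‖x - y‖ + q (x - y) ≤ η * ‖x‖) :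
    q y ≤ (a + η) / (1 - η) * ‖y‖ := by
  have hqy : q y ≤ (a + η) * ‖x‖ := by
    have := map_sub_le_add q x (x - y)
    rw [sub_sub_cancel] at this
    nlinarith [norm_nonneg (x - y)]
  have hxy' : (1 - η) * ‖x‖ ≤ ‖y‖ := by
    nlinarith [norm_sub_norm_le x y, apply_nonneg q (x - y)]
  rw [div_mul_eq_mul_div, le_div_iff₀ (by linarith)]
  nlinarith [apply_nonneg q y, norm_nonneg x, mul_le_mul_of_nonneg_left hxy' (add_nonneg ha hη₀)]

namespace IsNonnegHermitianFormOn

variable {H : Type*} [NormedAddCommGroup H] [InnerProductSpace ℂ H]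
  {Q : H → H → ℂ} {D : Submodule ℂ H}

theorem add_right (hQ : IsNonnegHermitianFormOn Q D) {u v w : H} (hu : u ∈ D) (hv : v ∈ D)
    (hw : w ∈ D) : Q u (v + w) = Q u v + Q u w := by
  rw [hQ.hermitian u _ hu (D.add_mem hv hw), hQ.add_left v w u hv hw hu, map_add,
    ← hQ.hermitian u v hu hv, ← hQ.hermitian u w hu hw]

theorem smul_right (hQ : IsNonnegHermitianFormOn Q D) (c : ℂ) {u v : H} (hu : u ∈ D)
    (hv : v ∈ D) : Q u (c • v) = starRingEnd ℂ c * Q u v := by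
  rw [hQ.hermitian u _ hu (D.smul_mem c hv), hQ.smul_left c v u hv hu, map_mul,
    ← hQ.hermitian u v hu hv]

theorem apply_zero_zero (hQ : IsNonnegHermitianFormOn Q D) : Q 0 0 = 0 := by
  simpa using hQ.smul_left 0 0 0 D.zero_mem D.zero_mem

/-- The arguments are swapped: Mathlib's inner products are conjugate-linear in the first one. -/
abbrev toCore (hQ : IsNonnegHermitianFormOn Q D) : PreInnerProductSpace.Core ℂ D where
  inner x y := Q y x
  conj_inner_symm x y := (hQ.hermitian y x y.2 x.2).symm
  re_inner_nonneg x := hQ.nonneg x x.2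
  add_left x y z := hQ.add_right z.2 x.2 y.2
  smul_left x y r := hQ.smul_right r y.2 x.2

noncomputable def formSeminorm (hQ : IsNonnegHermitianFormOn Q D) : Seminorm ℂ D :=
  Seminorm.of (fun x => √(Q x x).re)
    (@SeminormedSpace.Core.norm_triangle _ _ _ _ (InnerProductSpace.Core.toNorm (c := hQ.toCore))
      _ (InnerProductSpace.Core.toSeminormedSpaceCore hQ.toCore))
    (@SeminormedSpace.Core.norm_smul _ _ _ _ (InnerProductSpace.Core.toNorm (c := hQ.toCore))
      _ (InnerProductSpace.Core.toSeminormedSpaceCore hQ.toCore))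

/-- Equivalent to the graph norm `(‖u‖² + Q(u,u))^{1/2}`. -/
noncomputable def graphSeminorm (hQ : IsNonnegHermitianFormOn Q D) : Seminorm ℂ D :=
  normSeminorm ℂ D + hQ.formSeminorm

theorem formSeminorm_apply (hQ : IsNonnegHermitianFormOn Q D) (x : D) :
    hQ.formSeminorm x = √(Q x x).re := rfl

theorem re_le_of_formSeminorm_le (hQ : IsNonnegHermitianFormOn Q D) {x : D} {a : ℝ}
    (h : hQ.formSeminorm x ≤ a * ‖x‖) : (Q x x).re ≤ a ^ 2 * ‖x‖ ^ 2 := by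
  rw [← mul_pow, ← Real.sq_sqrt (hQ.nonneg x x.2)]
  exact pow_le_pow_left₀ (Real.sqrt_nonneg _) h 2

theorem formSeminorm_le_of_re_le (hQ : IsNonnegHermitianFormOn Q D) {x : D} {a : ℝ}
    (ha : 0 ≤ a) (h : (Q x x).re ≤ a ^ 2 * ‖x‖ ^ 2) : hQ.formSeminorm x ≤ a * ‖x‖ := by
  rw [formSeminorm_apply, ← mul_pow] at *
  exact Real.sqrt_le_iff.2 ⟨by positivity, h⟩

end IsNonnegHermitianFormOn

section Rayleigh

variable {H : Type*} [NormedAddCommGroup H] [InnerProductSpace ℂ H] {Q Q' : H → H → ℂ}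
  {L : Submodule ℂ H}

theorem rayleighSup_le_ofReal {M : ℝ} (h : ∀ u ∈ L, (Q u u).re ≤ M * ‖u‖ ^ 2) :
    rayleighSup Q L ≤ ENNReal.ofReal M := by
  refine iSup₂_le fun u ⟨hu, hu0⟩ => ENNReal.ofReal_le_ofReal ?_
  rw [div_le_iff₀ (by positivity)]
  exact h u hu

theorem re_le_mul_of_rayleighSup_le (hQ0 : Q 0 0 = 0) {M : ℝ} (hM : 0 ≤ M)
    (h : rayleighSup Q L ≤ ENNReal.ofReal M) {u : H} (hu : u ∈ L) :
    (Q u u).re ≤ M * ‖u‖ ^ 2 := by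
  rcases eq_or_ne u 0 with rfl | hu0
  · simp [hQ0]
  have := (le_iSup₂ (f := fun u (_ : u ∈ {u : H | u ∈ L ∧ u ≠ 0}) =>
    ENNReal.ofReal ((Q u u).re / ‖u‖ ^ 2)) u ⟨hu, hu0⟩).trans h
  rwa [ENNReal.ofReal_le_ofReal_iff hM, div_le_iff₀ (by positivity)] at this

theorem rayleighSup_mono (h : ∀ u ∈ L, (Q u u).re ≤ (Q' u u).re) :
    rayleighSup Q L ≤ rayleighSup Q' L :=
  iSup₂_mono fun u ⟨hu, _⟩ =>
    ENNReal.ofReal_le_ofReal (div_le_div_of_nonneg_right (h u hu) (by positivity))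

theorem varEig_le_varEig {D D' : Submodule ℂ H} (hD : D' ≤ D)
    (h : ∀ u ∈ D', (Q u u).re ≤ (Q' u u).re) (k : ℕ) : varEig Q D k ≤ varEig Q' D' k :=
  le_iInf₂ fun L ⟨hLD', hLk⟩ => (iInf₂_le L ⟨hLD'.trans hD, hLk⟩).trans
    (rayleighSup_mono fun u hu => h u (hLD' hu))

end Rayleigh

theorem exists_sq_div_one_sub_lt {a b : ℝ} (h : a ^ 2 < b) :
    ∃ η : ℝ, 0 < η ∧ η < 1 ∧ ((a + η) / (1 - η)) ^ 2 < b := by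
  have hcont : ContinuousAt (fun η : ℝ => ((a + η) / (1 - η)) ^ 2) 0 := by
    fun_prop (disch := norm_num)
  have hev : ∀ᶠ η in 𝓝[>] (0 : ℝ), ((a + η) / (1 - η)) ^ 2 < b ∧ η < 1 :=
    ((hcont.eventually (eventually_lt_nhds (by simpa using h))).and
      (eventually_lt_nhds one_pos)).filter_mono nhdsWithin_le_nhds
  obtain ⟨η, ⟨hηb, hη1⟩, hη0⟩ := (hev.and self_mem_nhdsWithin).exists
  exact ⟨η, hη0, hη1, hηb⟩

section Regularization

variable {H : Type*} [NormedAddCommGroup H] [InnerProductSpace ℂ H] {Q P : H → H → ℂ}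
  {D D' : Submodule ℂ H}

theorem eventually_rayleighSup_add_smul_le (hP : IsNonnegHermitianFormOn P D')
    {L : Submodule ℂ H} (hL : L ≤ D') [FiniteDimensional ℂ L] {M M' : ℝ}
    (hQ : ∀ u ∈ L, (Q u u).re ≤ M * ‖u‖ ^ 2) (hMM' : M < M') :
    ∀ᶠ t : ℝ in 𝓝[>] 0,
      rayleighSup (fun u v => Q u v + (t : ℂ) * P u v) L ≤ ENNReal.ofReal M' := by
  obtain ⟨C, hC⟩ := (hP.formSeminorm.comp (Submodule.inclusion hL)).exists_le_mul_norm
  have hPC : ∀ u ∈ L, (P u u).re ≤ C ^ 2 * ‖u‖ ^ 2 :=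
    fun u hu => hP.re_le_of_formSeminorm_le (hC ⟨u, hu⟩)
  have hC1 : (0 : ℝ) < C ^ 2 + 1 := by positivity
  filter_upwards [Ioo_mem_nhdsGT (div_pos (sub_pos.2 hMM') hC1)] with t ⟨ht0, ht⟩
  refine rayleighSup_le_ofReal fun u hu => ?_
  have htP : t * (P u u).re ≤ (M' - M) * ‖u‖ ^ 2 :=
    calc t * (P u u).re ≤ (M' - M) / (C ^ 2 + 1) * ((C ^ 2 + 1) * ‖u‖ ^ 2) := by
          gcongr
          · exact (hP.nonneg u (hL hu))
          · linarith [hPC u hu, sq_nonneg ‖u‖]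
      _ = (M' - M) * ‖u‖ ^ 2 := by field_simp
  simp only [Complex.add_re, Complex.re_ofReal_mul]
  linarith [hQ u hu]

def GraphDense (Q : H → H → ℂ) (D D' : Submodule ℂ H) : Prop :=
  ∀ u ∈ D, ∀ ε : ℝ, 0 < ε → ∃ v ∈ D', ‖u - v‖ ^ 2 + (Q (u - v) (u - v)).re < ε ^ 2

namespace GraphDense

theorem exists_graphSeminorm_sub_lt (hdense : GraphDense Q D D') (hD : D' ≤ D)
    (hQ : IsNonnegHermitianFormOn Q D) (u : D) {δ : ℝ} (hδ : 0 < δ) :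
    ∃ v ∈ D'.comap D.subtype, hQ.graphSeminorm (u - v) < δ := by
  obtain ⟨v, hv, huv⟩ := hdense u u.2 (δ / 2) (by positivity)
  have hQuv := hQ.nonneg _ (D.sub_mem u.2 (hD hv))
  refine ⟨⟨v, hD hv⟩, hv, ?_⟩
  have h₁ : ‖(u : H) - v‖ < δ / 2 :=
    lt_of_pow_lt_pow_left₀ 2 (by positivity) (by linarith)
  have h₂ : √(Q (u - v) (u - v)).re < δ / 2 :=
    (Real.sqrt_lt' (by positivity)).2 (by linarith [sq_nonneg ‖(u : H) - v‖])
  simp only [IsNonnegHermitianFormOn.graphSeminorm, add_apply, coe_normSeminorm,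
    IsNonnegHermitianFormOn.formSeminorm_apply]
  exact (add_lt_add h₁ h₂).trans_eq (add_halves δ)

theorem exists_subspace_re_le (hdense : GraphDense Q D D') (hD : D' ≤ D)
    (hQ : IsNonnegHermitianFormOn Q D) {L : Submodule ℂ H} (hLD : L ≤ D)
    [FiniteDimensional ℂ L]
    {M M₁ : ℝ} (hM0 : 0 ≤ M) (hM : ∀ u ∈ L, (Q u u).re ≤ M * ‖u‖ ^ 2) (hMM₁ : M < M₁) :
    ∃ L' : Submodule ℂ H, L' ≤ D' ∧ Module.finrank ℂ L' = Module.finrank ℂ L ∧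
      ∀ u ∈ L', (Q u u).re ≤ M₁ * ‖u‖ ^ 2 := by
  obtain ⟨η, hη0, hη1, hηM₁⟩ :=
    exists_sq_div_one_sub_lt (a := √M) (b := M₁) (by rwa [Real.sq_sqrt hM0])
  obtain ⟨T, hTD', hT⟩ := hQ.graphSeminorm.exists_linearMap_sub_le _
    (fun u δ hδ => hdense.exists_graphSeminorm_sub_lt hD hQ u hδ) (Submodule.inclusion hLD) hη0
  have hTinj : Function.Injective T := by
    refine (injective_iff_map_eq_zero T).2 fun x hx => norm_eq_zero.1 ?_
    have := hT x
    simp only [hx, sub_zero, IsNonnegHermitianFormOn.graphSeminorm, add_apply,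
      coe_normSeminorm] at this
    have hnorm : ‖Submodule.inclusion hLD x‖ = ‖x‖ := rfl
    nlinarith [norm_nonneg x, apply_nonneg hQ.formSeminorm (Submodule.inclusion hLD x)]
  refine ⟨LinearMap.range (D.subtype ∘ₗ T), ?_,
    LinearMap.finrank_range_of_inj (D.injective_subtype.comp hTinj), ?_⟩
  · rintro _ ⟨x, rfl⟩
    exact hTD' x
  · rintro _ ⟨x, rfl⟩
    have hx : hQ.formSeminorm (Submodule.inclusion hLD x) ≤
        √M * ‖Submodule.inclusion hLD x‖ :=
      hQ.formSeminorm_le_of_re_le (Real.sqrt_nonneg M) <| by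
        rw [Real.sq_sqrt hM0]; exact hM x x.2
    have hTx := hQ.re_le_of_formSeminorm_le
      (hQ.formSeminorm.le_mul_norm_of_sub_le (Real.sqrt_nonneg M) hη0.le hη1 hx (hT x))
    calc (Q (T x) (T x)).re ≤ ((√M + η) / (1 - η)) ^ 2 * ‖T x‖ ^ 2 := hTx
      _ ≤ M₁ * ‖T x‖ ^ 2 := by gcongr

theorem eventually_varEig_lt (hdense : GraphDense Q D D') (hD : D' ≤ D)
    (hQ : IsNonnegHermitianFormOn Q D) (hP : IsNonnegHermitianFormOn P D') {k : ℕ} (hk : 0 < k)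
    {a : ℝ≥0∞} (ha : varEig Q D k < a) :
    ∀ᶠ t : ℝ in 𝓝[>] 0, varEig (fun u v => Q u v + (t : ℂ) * P u v) D' k < a := by
  obtain ⟨L, ⟨hLD, hLk⟩, hLa⟩ : ∃ L : Submodule ℂ H,
      (L ≤ D ∧ Module.finrank ℂ L = k) ∧ rayleighSup Q L < a := by
    simpa [varEig, iInf_lt_iff] using ha
  have : FiniteDimensional ℂ L := Module.finite_of_finrank_pos (hLk ▸ hk)
  obtain ⟨M', -, hLM', hM'a⟩ := ENNReal.lt_iff_exists_real_btwn.1 hLa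
  obtain ⟨M, hM0, hLM, hMM'⟩ := ENNReal.lt_iff_exists_real_btwn.1 hLM'
  obtain ⟨M₁, hMM₁, hM₁M'⟩ := exists_between (ENNReal.ofReal_lt_ofReal_iff'.1 hMM').1
  obtain ⟨L', hL'D', hL'k, hL'⟩ := hdense.exists_subspace_re_le hD hQ hLD hM0
    (fun u hu => re_le_mul_of_rayleighSup_le hQ.apply_zero_zero hM0 hLM.le hu) hMM₁
  have : FiniteDimensional ℂ L' := Module.finite_of_finrank_pos (by rw [hL'k, hLk]; exact hk)
  filter_upwards [eventually_rayleighSup_add_smul_le hP hL'D' hL' hM₁M'] with t ht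
  calc varEig _ D' k ≤ rayleighSup _ L' := iInf₂_le L' ⟨hL'D', hL'k.trans hLk⟩
    _ ≤ ENNReal.ofReal M' := ht
    _ < a := hM'a

end GraphDense

end Regularization

theorem tendsto_varEig_regularization_general {H : Type*} [NormedAddCommGroup H]
    [InnerProductSpace ℂ H]
    (D D' : Submodule ℂ H) (hD : D' ≤ D)
    (Q P : H → H → ℂ)
    (hQ : IsNonnegHermitianFormOn Q D) (hP : IsNonnegHermitianFormOn P D')
    (hdense : ∀ u ∈ D, ∀ ε : ℝ, 0 < ε →
      ∃ v ∈ D', ‖u - v‖ ^ 2 + (Q (u - v) (u - v)).re < ε ^ 2)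
    (k : ℕ) (hk : 0 < k) :
    Filter.Tendsto (fun t : ℝ => varEig (fun u v => Q u v + (t : ℂ) * P u v) D' k)
      (nhdsWithin 0 (Set.Ioi 0)) (nhds (varEig Q D k)) := by
  have hle : ∀ t : ℝ, 0 < t →
      varEig Q D k ≤ varEig (fun u v => Q u v + (t : ℂ) * P u v) D' k := fun t ht =>
    varEig_le_varEig hD (fun u hu => by
      simpa [Complex.re_ofReal_mul] using mul_nonneg ht.le (hP.nonneg u hu)) k
  exact tendsto_order.2
    ⟨fun a ha => eventually_nhdsWithin_of_forall fun t ht => ha.trans_le (hle t ht),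
      fun a ha => GraphDense.eventually_varEig_lt hdense hD hQ hP hk ha⟩

/-- Abstract core of Theorem 3.1 of the paper: if `D' ⊆ D` is graph-norm dense, then the
variational eigenvalues of the regularized form `Q^t = Q + tP` on `D'` converge to the
variational eigenvalues of `Q` on `D` as `t → 0⁺`. -/
theorem tendsto_varEig_regularization {H : Type*} [NormedAddCommGroup H]
    [InnerProductSpace ℂ H] [CompleteSpace H]
    (D D' : Submodule ℂ H) (hD : D' ≤ D)
    (Q P : H → H → ℂ)
    (hQ : IsNonnegHermitianFormOn Q D) (hP : IsNonnegHermitianFormOn P D')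
    (hdense : ∀ u ∈ D, ∀ ε : ℝ, 0 < ε →
      ∃ v ∈ D', ‖u - v‖ ^ 2 + (Q (u - v) (u - v)).re < ε ^ 2)
    (k : ℕ) (hk : 0 < k) :
    Filter.Tendsto (fun t : ℝ => varEig (fun u v => Q u v + (t : ℂ) * P u v) D' k)
      (nhdsWithin 0 (Set.Ioi 0)) (nhds (varEig Q D k)) :=
  tendsto_varEig_regularization_general D D' hD Q P hQ hP hdense k hk
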